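/- Let F be a field and n ≥ 1. If (X, v) and (Y, w) are two regular pairs in M_n(F) × F^n whose matrices have equal characteristic polynomials, then there exists a unique g ∈ GL_n(F) such that g⁻¹Xg = Y and v·g = w. In other words, the map sending a regular pair to the characteristic polynomial of its matrix has GL_n(F) acting simply transitively on each of its fibers. -/

import Mathlib

/-!
The rows `v Xⁱ` (`i < n`) of the Krylov matrix `P` of a regular pair `(X, v)` form a basis, so
`P` is invertible and `g` is pinned down by `P g = Q`, where `Q` is the Krylov matrix of `(Y, w)`:
this gives uniqueness, and `g = P⁻¹ Q` is the candidate. Conversely `P g = Q` says `v Xⁱ g = w Yⁱ`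
for `i < n`; Cayley–Hamilton, with the common characteristic polynomial, extends this to `i = n`.
Then `X g` and `g Y` agree on the basis `v Xⁱ`, so `g⁻¹ X g = Y`, and `i = 0` gives `v g = w`.
-/

/-- A pair `(X, v)` of an `n × n` matrix and a row vector is *regular* if
`v, vX, vX², …, vX^{n-1}` form a basis of `Fⁿ`. Row vectors are multiplied
by matrices on the right. -/
def IsRegularPair {F : Type*} [Field F] {n : ℕ}
    (X : Matrix (Fin n) (Fin n) F) (v : Fin n → F) : Prop :=
  LinearIndependent F (fun i : Fin n => Matrix.vecMul v (X ^ (i : ℕ))) ∧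
  Submodule.span F (Set.range fun i : Fin n => Matrix.vecMul v (X ^ (i : ℕ))) = ⊤

open Matrix Polynomial

namespace Matrix

variable {R : Type*} [CommRing R]

theorem pow_card_eq_neg_sum_charpoly_coeff [Nontrivial R] {n : ℕ} (X : Matrix (Fin n) (Fin n) R) :
    X ^ n = -∑ k : Fin n, X.charpoly.coeff k • X ^ (k : ℕ) := by
  have hdeg : X.charpoly.natDegree = n := by simp [X.charpoly_natDegree_eq_dim]
  have hlead : X.charpoly.coeff n = 1 := by
    rw [← X.charpoly_monic.coeff_natDegree, hdeg]
  have hCH := X.aeval_self_charpoly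
  rw [aeval_eq_sum_range, hdeg, Finset.sum_range_succ, hlead, one_smul,
    add_eq_zero_iff_neg_eq'] at hCH
  rw [Fin.sum_univ_eq_sum_range (fun k => X.charpoly.coeff k • X ^ k), ← hCH, neg_neg]

theorem ext_of_vecMul_eq_of_span_eq_top {m ι : Type*} [Fintype m] {s : ι → m → R}
    (hs : Submodule.span R (Set.range s) = ⊤) {A B : Matrix m m R}
    (h : ∀ i, s i ᵥ* A = s i ᵥ* B) : A = B :=
  vecMul_injective (congrArg DFunLike.coe (LinearMap.ext_on_range (f := A.vecMulLinear)
    (g := B.vecMulLinear) hs h))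

end Matrix

section Krylov

variable {R : Type*} [CommRing R] {n : ℕ} {X Y : Matrix (Fin n) (Fin n) R} {v w : Fin n → R}

def krylovMatrix (X : Matrix (Fin n) (Fin n) R) (v : Fin n → R) : Matrix (Fin n) (Fin n) R :=
  Matrix.of fun i : Fin n => v ᵥ* X ^ (i : ℕ)

theorem krylovMatrix_mul_eq_iff [Nontrivial R] (hchar : X.charpoly = Y.charpoly)
    (g : Matrix (Fin n) (Fin n) R) :
    krylovMatrix X v * g = krylovMatrix Y w ↔ ∀ k ≤ n, v ᵥ* X ^ k ᵥ* g = w ᵥ* Y ^ k := by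
  refine ⟨fun h k hk => ?_, fun h => funext fun i => h i i.is_lt.le⟩
  have hrow (i : Fin n) : v ᵥ* X ^ (i : ℕ) ᵥ* g = w ᵥ* Y ^ (i : ℕ) := congrFun h i
  rcases hk.lt_or_eq with hk | rfl
  · exact hrow ⟨k, hk⟩
  · simp only [pow_card_eq_neg_sum_charpoly_coeff X, pow_card_eq_neg_sum_charpoly_coeff Y, hchar,
      vecMul_neg, neg_vecMul, vecMul_sum, sum_vecMul, vecMul_smul, smul_vecMul, hrow]

theorem conj_eq_and_vecMul_eq_iff
    (hspan : Submodule.span R (Set.range fun i : Fin n => v ᵥ* X ^ (i : ℕ)) = ⊤)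
    (g : GL (Fin n) R) :
    ((↑g⁻¹ : Matrix (Fin n) (Fin n) R) * X * g = Y ∧ v ᵥ* g = w) ↔
      ∀ k ≤ n, v ᵥ* X ^ k ᵥ* g = w ᵥ* Y ^ k := by
  rw [mul_assoc, Units.inv_mul_eq_iff_eq_mul, eq_comm]
  constructor
  · rintro ⟨hconj, rfl⟩ k -
    rw [vecMul_vecMul, ← SemiconjBy.pow_right hconj k, ← vecMul_vecMul]
  · intro h
    refine ⟨ext_of_vecMul_eq_of_span_eq_top hspan fun i => ?_, by simpa using h 0 n.zero_le⟩
    calc v ᵥ* X ^ (i : ℕ) ᵥ* (g * Y : Matrix (Fin n) (Fin n) R)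
          = w ᵥ* Y ^ (i + 1 : ℕ) := by
          rw [← vecMul_vecMul, h i i.is_lt.le, vecMul_vecMul, pow_succ]
      _ = v ᵥ* X ^ (i + 1 : ℕ) ᵥ* g := (h _ i.is_lt).symm
      _ = v ᵥ* X ^ (i : ℕ) ᵥ* (X * g : Matrix (Fin n) (Fin n) R) := by
          simp only [vecMul_vecMul, pow_succ, mul_assoc]

end Krylov

theorem IsRegularPair.isUnit_krylovMatrix {F : Type*} [Field F] {n : ℕ}
    {X : Matrix (Fin n) (Fin n) F} {v : Fin n → F} (h : IsRegularPair X v) :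
    IsUnit (krylovMatrix X v) :=
  linearIndependent_rows_iff_isUnit.mp h.1

theorem regular_pairs_simply_transitive_general {F : Type*} [Field F] {n : ℕ}
    (X Y : Matrix (Fin n) (Fin n) F) (v w : Fin n → F)
    (hXv : IsRegularPair X v) (hYw : IsRegularPair Y w)
    (hchar : X.charpoly = Y.charpoly) :
    ∃! g : GL (Fin n) F,
      (↑g⁻¹ : Matrix (Fin n) (Fin n) F) * X * (↑g : Matrix (Fin n) (Fin n) F) = Y ∧
      Matrix.vecMul v (↑g : Matrix (Fin n) (Fin n) F) = w := by
  obtain ⟨P, hP⟩ := hXv.isUnit_krylovMatrix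
  obtain ⟨Q, hQ⟩ := hYw.isUnit_krylovMatrix
  have hiff (g : GL (Fin n) F) :
      ((↑g⁻¹ : Matrix (Fin n) (Fin n) F) * X * g = Y ∧ v ᵥ* g = w) ↔ P * g = Q := by
    rw [conj_eq_and_vecMul_eq_iff hXv.2, ← krylovMatrix_mul_eq_iff hchar, ← hP, ← hQ,
      ← Units.val_mul, Units.val_inj]
  simpa only [hiff] using (Group.mulLeft_bijective P).existsUnique Q

/-- `GL_n(F)` acts simply transitively on the set of regular pairs with a given
characteristic polynomial: if `(X, v)` and `(Y, w)` are regular pairs with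
`charpoly X = charpoly Y`, then there is a unique `g ∈ GL_n(F)` with
`g⁻¹Xg = Y` and `v·g = w`. -/
theorem regular_pairs_simply_transitive {F : Type*} [Field F] {n : ℕ} (hn : 1 ≤ n)
    (X Y : Matrix (Fin n) (Fin n) F) (v w : Fin n → F)
    (hXv : IsRegularPair X v) (hYw : IsRegularPair Y w)
    (hchar : X.charpoly = Y.charpoly) :
    ∃! g : GL (Fin n) F,
      (↑g⁻¹ : Matrix (Fin n) (Fin n) F) * X * (↑g : Matrix (Fin n) (Fin n) F) = Y ∧
      Matrix.vecMul v (↑g : Matrix (Fin n) (Fin n) F) = w :=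
  regular_pairs_simply_transitive_general X Y v w hXv hYw hchar
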